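/- For an analytic map f(x) = -x + Σ_{j≥2} a_j x^j with f(f(x)) = x + Σ_{j≥3} W_j x^j, one has W₅ = -6a₄a₂ + 4a₃² - 2a₅ - a₂²a₃ - a₃², up to the relation W₅ - (1/2)a₃·W₃ = -6a₂a₄ + 4a₃² - 2a₅. That is, the coefficient of x⁵ in f∘f satisfies W₅ = V₅ + (1/2)a₃V₃ with V₃ = -2a₂² - 2a₃ and V₅ = -6a₂a₄ + 4a₃² - 2a₅. -/

import Mathlib

/-!
The Taylor coefficients of `f` at `0` are the coefficients of its power series `p`, and `f ∘ f`
has the power series `p.comp p` because `f 0 = 0`. The fifth coefficient of a composite series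
is a sum over the sixteen compositions of `5` (Faà di Bruno), which is evaluated explicitly.
-/

open FormalMultilinearSeries

variable {𝕜 : Type*} [NontriviallyNormedField 𝕜]

theorem FormalMultilinearSeries.coeff_comp (q p : FormalMultilinearSeries 𝕜 𝕜 𝕜) (n : ℕ) :
    (q.comp p).coeff n = ∑ c : Composition n, q.coeff c.length * (c.blocks.map p.coeff).prod := by
  rw [coeff, FormalMultilinearSeries.comp, sum_apply]
  refine Finset.sum_congr rfl fun c _ => ?_
  rw [compAlongComposition_apply, apply_eq_prod_smul_coeff, smul_eq_mul, mul_comm,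
    ← c.ofFn_blocksFun, List.map_ofFn, List.prod_ofFn]
  rfl

theorem Composition.univ_five : (Finset.univ : Finset (Composition 5)) =
    {⟨[1, 1, 1, 1, 1], by decide, by decide⟩, ⟨[1, 1, 1, 2], by decide, by decide⟩,
     ⟨[1, 1, 2, 1], by decide, by decide⟩, ⟨[1, 2, 1, 1], by decide, by decide⟩,
     ⟨[2, 1, 1, 1], by decide, by decide⟩, ⟨[1, 1, 3], by decide, by decide⟩,
     ⟨[1, 3, 1], by decide, by decide⟩, ⟨[3, 1, 1], by decide, by decide⟩,
     ⟨[1, 2, 2], by decide, by decide⟩, ⟨[2, 1, 2], by decide, by decide⟩,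
     ⟨[2, 2, 1], by decide, by decide⟩, ⟨[1, 4], by decide, by decide⟩,
     ⟨[4, 1], by decide, by decide⟩, ⟨[2, 3], by decide, by decide⟩,
     ⟨[3, 2], by decide, by decide⟩, ⟨[5], by decide, by decide⟩} :=
  (Finset.eq_univ_of_card _ (by rw [composition_card]; decide)).symm

theorem FormalMultilinearSeries.coeff_comp_five (q p : FormalMultilinearSeries 𝕜 𝕜 𝕜) :
    (q.comp p).coeff 5 = q.coeff 1 * p.coeff 5
      + q.coeff 2 * (2 * p.coeff 1 * p.coeff 4 + 2 * p.coeff 2 * p.coeff 3)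
      + q.coeff 3 * (3 * p.coeff 1 ^ 2 * p.coeff 3 + 3 * p.coeff 1 * p.coeff 2 ^ 2)
      + q.coeff 4 * (4 * p.coeff 1 ^ 3 * p.coeff 2) + q.coeff 5 * p.coeff 1 ^ 5 := by
  rw [coeff_comp, Composition.univ_five]
  simp [Finset.sum_insert, Composition.length]
  ring

theorem HasFPowerSeriesAt.coeff_eq_iteratedDeriv_div [CompleteSpace 𝕜] [CharZero 𝕜]
    {f : 𝕜 → 𝕜} {p : FormalMultilinearSeries 𝕜 𝕜 𝕜} {x : 𝕜} (hp : HasFPowerSeriesAt f p x)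
    (n : ℕ) : p.coeff n = iteratedDeriv n f x / n.factorial := by
  rw [hp.eq_formalMultilinearSeries hp.analyticAt.hasFPowerSeriesAt, coeff_ofScalars]

theorem stmt15 (f : ℝ → ℝ) (a2 a3 a4 a5 : ℝ) (hf : AnalyticAt ℝ f 0)
    (h0 : f 0 = 0) (h1 : deriv f 0 = -1)
    (h2 : iteratedDeriv 2 f 0 / 2 = a2) (h3 : iteratedDeriv 3 f 0 / 6 = a3)
    (h4 : iteratedDeriv 4 f 0 / 24 = a4) (h5 : iteratedDeriv 5 f 0 / 120 = a5) :
    iteratedDeriv 5 (f ∘ f) 0 / 120 =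
      (-6 * a2 * a4 + 4 * a3 ^ 2 - 2 * a5) + (1 / 2) * a3 * (-2 * a2 ^ 2 - 2 * a3) := by
  obtain ⟨p, hp⟩ := hf
  have hpp : HasFPowerSeriesAt (f ∘ f) (p.comp p) 0 := (h0 ▸ hp).comp hp
  have hcoeff := hp.coeff_eq_iteratedDeriv_div
  have hcoeff_comp := hpp.coeff_eq_iteratedDeriv_div 5
  rw [coeff_comp_five, hcoeff 1, hcoeff 2, hcoeff 3, hcoeff 4, hcoeff 5] at hcoeff_comp
  subst a2 a3 a4 a5
  norm_num [Nat.factorial, h1] at hcoeff_comp ⊢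
  linear_combination -hcoeff_comp
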